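/- Let P be a naturally labeled partial order on {1,2,…,m} and let π ∈ L(P). Then for every i and every x ∈ DB_i(π), we have mc(x) ≤ i; consequently DB_i(π) ⊆ C_1 ∪ C_2 ∪ ⋯ ∪ C_i, where C_j = {y : mc(y) = j}. -/

import Mathlib

open Finset Polynomial LaurentPolynomial

attribute [local instance] Classical.propDecidable

/-- The value `π_i` of the word of `π` at the 1-based position `i` (values in `{1, …, m}`). -/
def wordAt (m : ℕ) (π : Equiv.Perm (Fin m)) (i : ℕ) : ℕ :=
  if h : i - 1 < m then ((π ⟨i - 1, h⟩ : Fin m) : ℕ) + 1 else 0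

/-- The descent set `Des(π) ⊆ {1, …, m-1}` (1-based positions). -/
def DesSet (m : ℕ) (π : Equiv.Perm (Fin m)) : Finset ℕ :=
  (Finset.Ico 1 m).filter fun i => wordAt m π (i + 1) < wordAt m π i

/-- The number of descents `des(π)`. -/
def desNum (m : ℕ) (π : Equiv.Perm (Fin m)) : ℕ := (DesSet m π).card

/-- The major index `maj(π)`. -/
def majIdx (m : ℕ) (π : Equiv.Perm (Fin m)) : ℕ := ∑ i ∈ DesSet m π, i

/-- The partial order `P` on `{1,…,m}` (encoded as `Fin m`) is naturally labeled:
`x ≤_P y` implies `x ≤ y` as integers. -/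
def NatLabeled (m : ℕ) (P : PartialOrder (Fin m)) : Prop :=
  ∀ x y : Fin m, P.le x y → x ≤ y

/-- `π` is a linear extension of `P`: `π_i ≤_P π_j` implies `i ≤ j`. -/
def IsLinExt (m : ℕ) (P : PartialOrder (Fin m)) (π : Equiv.Perm (Fin m)) : Prop :=
  ∀ i j : Fin m, P.le (π i) (π j) → i ≤ j

/-- `mc(x)`: the maximum number of elements of a chain of `P` whose largest element is `x`. -/
noncomputable def mc (m : ℕ) (P : PartialOrder (Fin m)) (x : Fin m) : ℕ :=
  sSup {k : ℕ | ∃ s : Finset (Fin m),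
    s.card = k ∧ IsChain P.le ↑s ∧ x ∈ s ∧ ∀ y ∈ s, P.le y x}

/-- `m̄c(x)`: the maximum number of elements of a chain of `P` whose smallest element is `x`. -/
noncomputable def mcUp (m : ℕ) (P : PartialOrder (Fin m)) (x : Fin m) : ℕ :=
  sSup {k : ℕ | ∃ s : Finset (Fin m),
    s.card = k ∧ IsChain P.le ↑s ∧ x ∈ s ∧ ∀ y ∈ s, P.le x y}

/-- The `q`-integer `[n]_q` for `n ∈ ℤ`, as a Laurent polynomial:
`[n]_q = 1 + q + ⋯ + q^{n-1}` for `n ≥ 0` and `[-n]_q = -q^{-n} [n]_q`. -/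
noncomputable def qInt (n : ℤ) : LaurentPolynomial ℤ :=
  if 0 ≤ n then ∑ i ∈ Finset.range n.toNat, T (i : ℤ)
  else -(T n * ∑ i ∈ Finset.range (-n).toNat, T (i : ℤ))

/-- The polynomial `F_P(q,x) = Σ_{π ∈ L(P)} q^{maj π} Π_{i=1}^m ([i - des π]_q + q^{i - des π} x)`,
an element of `(ℤ[q,q⁻¹])[x]` (it in fact lies in `ℤ[q,x]`). -/
noncomputable def Fpoly (m : ℕ) (P : PartialOrder (Fin m)) : Polynomial (LaurentPolynomial ℤ) :=
  ∑ π ∈ Finset.univ.filter (fun π => IsLinExt m P π),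
    Polynomial.C (T (majIdx m π : ℤ)) *
      ∏ i ∈ Finset.Icc 1 m,
        (Polynomial.C (qInt ((i : ℤ) - desNum m π)) +
          Polynomial.C (T ((i : ℤ) - desNum m π)) * Polynomial.X)

/-- The Newton polygon of an element of `(ℤ[q,q⁻¹])[x]`, in the `(q,x)`-plane. -/
noncomputable def NTL (f : Polynomial (LaurentPolynomial ℤ)) : Set (ℝ × ℝ) :=
  convexHull ℝ {p : ℝ × ℝ | ∃ (i : ℤ) (k : ℕ), (AddMonoidAlgebra.coeff (f.coeff k)) i ≠ 0 ∧ p = ((i : ℝ), (k : ℝ))}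

/-- The Newton polygon of an element of `ℤ[q][x]`, in the `(q,x)`-plane. -/
noncomputable def NTP (f : Polynomial (Polynomial ℤ)) : Set (ℝ × ℝ) :=
  convexHull ℝ {p : ℝ × ℝ | ∃ (i k : ℕ), (f.coeff k).coeff i ≠ 0 ∧ p = ((i : ℝ), (k : ℝ))}

/-- The polygon `C(a_1,…,a_m;h)`: the convex hull of `(0,0)`, `(a_1+⋯+a_i, i)` for
`1 ≤ i ≤ m`, `(h,m)` and `(h-m,0)`. -/
noncomputable def Cpolygon (m : ℕ) (a : ℕ → ℕ) (h : ℕ) : Set (ℝ × ℝ) :=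
  convexHull ℝ ({((0 : ℝ), (0 : ℝ)), ((h : ℝ), (m : ℝ)), ((h : ℝ) - (m : ℝ), (0 : ℝ))} ∪
    {p : ℝ × ℝ | ∃ i ∈ Finset.Icc 1 m, p = ((∑ j ∈ Finset.Icc 1 i, (a j : ℝ)), (i : ℝ))})

/-- The index of the descent block of `π` containing the 1-based position `j`. -/
def blockIdx (m : ℕ) (π : Equiv.Perm (Fin m)) (j : ℕ) : ℕ :=
  1 + ((Finset.Ico 1 j).filter (fun i => i ∉ DesSet m π)).card

/-- `DB_i(π)`: the set of entries of the `i`-th descent block of `π`. -/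
def DB (m : ℕ) (π : Equiv.Perm (Fin m)) (i : ℕ) : Finset (Fin m) :=
  Finset.univ.filter fun x => blockIdx m π (((π.symm x : Fin m) : ℕ) + 1) = i

/-- `PP(P,n)`: the set of `P`-partitions (order-reversing maps) with all parts at most `n`,
encoded as functions `Fin m → Fin (n+1)`. -/
noncomputable def PPset (m : ℕ) (P : PartialOrder (Fin m)) (n : ℕ) :
    Finset (Fin m → Fin (n + 1)) :=
  Finset.univ.filter fun σ => ∀ x y : Fin m, P.le x y → σ y ≤ σ x

/-- `|σ| = σ(1) + ⋯ + σ(m)`. -/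
def sizePP (m n : ℕ) (σ : Fin m → Fin (n + 1)) : ℕ := ∑ i : Fin m, (σ i : ℕ)

/-- The `q`-integer `[n]_q` for `n ∈ ℕ`, as an ordinary polynomial in `q`. -/
noncomputable def qIntP (n : ℕ) : Polynomial ℤ := ∑ i ∈ Finset.range n, Polynomial.X ^ i

/-- The `q`-factorial `[n]_q!`. -/
noncomputable def qFact (n : ℕ) : Polynomial ℤ := ∏ i ∈ Finset.Icc 1 n, qIntP i

/-- The dual poset `P̄` : `x ≤_{P̄} y` iff `y ≤_P x`. -/
def dualP (m : ℕ) (P : PartialOrder (Fin m)) : PartialOrder (Fin m) where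
  le x y := P.le y x
  lt x y := P.lt y x
  le_refl x := P.le_refl x
  le_trans a b c h1 h2 := P.le_trans c b a h2 h1
  le_antisymm a b h1 h2 := P.le_antisymm a b h2 h1
  lt_iff_le_not_ge a b := P.lt_iff_le_not_ge b a

/-- The canonical ring map `ℤ[q] → ℚ(q)`. -/
noncomputable def toRF : Polynomial ℤ →+* RatFunc ℚ :=
  (algebraMap (Polynomial ℚ) (RatFunc ℚ)).comp (Polynomial.mapRingHom (Int.castRingHom ℚ))

/-- `W(n·O(P), q) = Σ_σ q^{|σ|}`, the sum being over all order-preserving maps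
`σ : P → {0,…,n}`. -/
noncomputable def Wpoly (m : ℕ) (P : PartialOrder (Fin m)) (n : ℕ) : Polynomial ℤ :=
  ∑ σ ∈ (Finset.univ.filter fun σ : Fin m → Fin (n + 1) =>
      ∀ x y : Fin m, P.le x y → σ x ≤ σ y),
    Polynomial.X ^ (∑ i : Fin m, (σ i : ℕ))

/-- The polynomial `q^{mj - s(s-1)/2} Π_{i=1}^{s-1} (x - [i]_q) Π_{i=1}^{m-s} (q^i x + [i]_q)`. -/
noncomputable def tSummand (m s mj : ℕ) : Polynomial (LaurentPolynomial ℤ) :=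
  Polynomial.C (T ((mj : ℤ) - (s * (s - 1) / 2 : ℕ))) *
    (∏ i ∈ Finset.Icc 1 (s - 1), (Polynomial.X - Polynomial.C (qInt (i : ℤ)))) *
    ∏ i ∈ Finset.Icc 1 (m - s),
      (Polynomial.C (T (i : ℤ)) * Polynomial.X + Polynomial.C (qInt (i : ℤ)))

/-- `t(π,k)`: the coefficient of `x^{k-1}` in
`q^{maj π - s(s-1)/2} Π_{i=1}^{s-1} (x - [i]_q) Π_{i=1}^{m-s} (q^i x + [i]_q)`,
where `s = des π`. -/
noncomputable def tpoly (m : ℕ) (π : Equiv.Perm (Fin m)) (k : ℕ) : LaurentPolynomial ℤ :=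
  (tSummand m (desNum m π) (majIdx m π)).coeff (k - 1)

/-- The polynomial `A(q,x) = Π_{i=1}^m (q^i x + [i]_q)`. -/
noncomputable def Apoly (m : ℕ) : Polynomial (LaurentPolynomial ℤ) :=
  ∏ i ∈ Finset.Icc 1 m,
    (Polynomial.C (T (i : ℤ)) * Polynomial.X + Polynomial.C (qInt (i : ℤ)))

/-- The polynomial `B(q,x) = x Σ_{π ∈ L(P), des π ≥ 1} q^{maj π - s(s-1)/2}
Π_{i=1}^{s-1} (x - [i]_q) Π_{i=1}^{m-s} (q^i x + [i]_q)`, where `s = des π`;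
one has `F_P(q,x) = A(q,x) + B(q,x)`. -/
noncomputable def Bpoly (m : ℕ) (P : PartialOrder (Fin m)) : Polynomial (LaurentPolynomial ℤ) :=
  Polynomial.X *
    ∑ π ∈ Finset.univ.filter (fun π => IsLinExt m P π ∧ 1 ≤ desNum m π),
      tSummand m (desNum m π) (majIdx m π)

/- Along a linear extension the descent-block index of an entry never decreases, and it strictly
increases from `y` to `z` whenever `y <_P z`: inside a descent block the entries decrease, whereas
natural labeling gives `y < z`. Hence a chain of `P` with largest element `x ∈ DB_i(π)` is mapped
injectively into `{1, …, i}` by the block index. -/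

section DescentBlocks

variable {m : ℕ} (π : Equiv.Perm (Fin m))

lemma blockIdx_mono : Monotone (blockIdx m π) := fun _ _ h =>
  Nat.add_le_add_left (card_le_card (filter_subset_filter _ (Ico_subset_Ico le_rfl h))) 1

lemma blockIdx_succ_of_notMem_DesSet {j : ℕ} (hj : 1 ≤ j) (hdes : j ∉ DesSet m π) :
    blockIdx m π (j + 1) = blockIdx m π j + 1 := by
  simp only [blockIdx, Nat.Ico_succ_right_eq_insert_Ico hj, filter_insert, hdes,
    not_false_eq_true, if_true]
  rw [card_insert_of_notMem (by simp)]
  ring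

lemma wordAt_succ_lt_of_blockIdx_succ_eq {j : ℕ} (hj : 1 ≤ j)
    (h : blockIdx m π (j + 1) = blockIdx m π j) : wordAt m π (j + 1) < wordAt m π j := by
  by_contra hasc
  have hdes : j ∉ DesSet m π := fun hmem => hasc (mem_filter.1 hmem).2
  rw [blockIdx_succ_of_notMem_DesSet π hj hdes] at h
  omega

lemma wordAt_lt_of_blockIdx_eq {p q : ℕ} (hp : 1 ≤ p) (hpq : p < q)
    (h : blockIdx m π p = blockIdx m π q) : wordAt m π q < wordAt m π p := by
  induction q, hpq using Nat.le_induction with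
  | base => exact wordAt_succ_lt_of_blockIdx_succ_eq π hp h.symm
  | succ q hpq ih =>
    have hq : blockIdx m π q = blockIdx m π p :=
      le_antisymm (h ▸ blockIdx_mono π q.le_succ) (blockIdx_mono π (Nat.le_of_succ_le hpq))
    exact (wordAt_succ_lt_of_blockIdx_succ_eq π (by omega) (h.symm.trans hq.symm)).trans
      (ih hq.symm)

lemma wordAt_symm_add_one (y : Fin m) : wordAt m π ((π.symm y : ℕ) + 1) = (y : ℕ) + 1 := by
  simp [wordAt]

def blockOf (y : Fin m) : ℕ := blockIdx m π ((π.symm y : ℕ) + 1)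

lemma mem_DB_iff {i : ℕ} {x : Fin m} : x ∈ DB m π i ↔ blockOf π x = i := by
  simp [DB, blockOf]

lemma one_le_blockOf (y : Fin m) : 1 ≤ blockOf π y := Nat.le_add_right 1 _

variable {P : PartialOrder (Fin m)} (hnat : NatLabeled m P) (hπ : IsLinExt m P π)
include hnat hπ

lemma blockOf_lt_of_le_of_ne {y z : Fin m} (hle : P.le y z) (hne : y ≠ z) :
    blockOf π y < blockOf π z := by
  have hyz : (y : ℕ) ≤ z := hnat y z hle
  have hpos : (π.symm y : ℕ) < π.symm z :=
    Nat.lt_of_le_of_ne (hπ _ _ (by rwa [Equiv.apply_symm_apply, Equiv.apply_symm_apply]))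
      (Fin.val_ne_of_ne (π.symm.injective.ne hne))
  -- `P` is a local instance on `Fin m`, and `omega` would read `hle` as the integer order
  clear hle
  refine lt_of_le_of_ne (blockIdx_mono π (by omega)) fun heq => ?_
  have hword := wordAt_lt_of_blockIdx_eq π (Nat.le_add_left 1 _)
    (by omega : (π.symm y : ℕ) + 1 < (π.symm z : ℕ) + 1) heq
  rw [wordAt_symm_add_one, wordAt_symm_add_one] at hword
  omega

lemma blockOf_le_of_le {y z : Fin m} (hle : P.le y z) : blockOf π y ≤ blockOf π z := by
  rcases eq_or_ne y z with rfl | hne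
  · exact le_rfl
  · exact (blockOf_lt_of_le_of_ne π hnat hπ hle hne).le

end DescentBlocks

section MaxChain

variable {m : ℕ} {P : PartialOrder (Fin m)}

lemma le_mc_of_isChain {x : Fin m} {s : Finset (Fin m)} (hchain : IsChain P.le (s : Set (Fin m)))
    (hx : x ∈ s) (htop : ∀ y ∈ s, P.le y x) : s.card ≤ mc m P x :=
  le_csSup ⟨m, fun _ ⟨t, ht, _⟩ => ht ▸ (card_le_univ t).trans_eq (Fintype.card_fin m)⟩
    ⟨s, rfl, hchain, hx, htop⟩

lemma one_le_mc (x : Fin m) : 1 ≤ mc m P x :=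
  le_mc_of_isChain (s := {x}) (by simp) (mem_singleton_self x)
    (fun y hy => (mem_singleton.1 hy) ▸ P.le_refl x)

lemma mc_le_blockOf (π : Equiv.Perm (Fin m)) (hnat : NatLabeled m P) (hπ : IsLinExt m P π)
    (x : Fin m) : mc m P x ≤ blockOf π x := by
  refine csSup_le' ?_
  rintro _ ⟨s, rfl, hchain, -, htop⟩
  have hmaps : ∀ y ∈ s, blockOf π y ∈ Icc 1 (blockOf π x) := fun y hy =>
    mem_Icc.2 ⟨one_le_blockOf π y, blockOf_le_of_le π hnat hπ (htop y hy)⟩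
  have hinj : Set.InjOn (blockOf π) s := by
    intro y hy z hz heq
    by_contra hne
    rcases hchain hy hz hne with h | h
    · exact (blockOf_lt_of_le_of_ne π hnat hπ h hne).ne heq
    · exact (blockOf_lt_of_le_of_ne π hnat hπ h (Ne.symm hne)).ne heq.symm
  simpa using card_le_card_of_injOn (blockOf π) hmaps hinj

end MaxChain

theorem statement19_general (m : ℕ) (P : PartialOrder (Fin m))
    (hnat : NatLabeled m P)
    (π : Equiv.Perm (Fin m)) (hπ : IsLinExt m P π) (i : ℕ) :
    (∀ x ∈ DB m π i, mc m P x ≤ i) ∧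
    DB m π i ⊆ (Finset.Icc 1 i).biUnion
      (fun j => Finset.univ.filter fun y => mc m P y = j) := by
  have hmc : ∀ x ∈ DB m π i, mc m P x ≤ i := fun x hx =>
    (mem_DB_iff π).1 hx ▸ mc_le_blockOf π hnat hπ x
  refine ⟨hmc, fun x hx => ?_⟩
  simp only [mem_biUnion, mem_Icc, mem_filter, mem_univ, true_and]
  exact ⟨mc m P x, ⟨one_le_mc x, hmc x hx⟩, rfl⟩

theorem statement19 (m : ℕ) (hm : 1 ≤ m) (P : PartialOrder (Fin m))
    (hnat : NatLabeled m P)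
    (π : Equiv.Perm (Fin m)) (hπ : IsLinExt m P π) (i : ℕ) :
    (∀ x ∈ DB m π i, mc m P x ≤ i) ∧
    DB m π i ⊆ (Finset.Icc 1 i).biUnion
      (fun j => Finset.univ.filter fun y => mc m P y = j) :=
  statement19_general m P hnat π hπ i
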